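/- Let ψ be the stream function of a nonnegative ω ∈ L¹ ∩ L²(ℝ²₊) with x₂ω ∈ L¹, and assume ω is symmetric in x₁ and non-increasing for x₁ > 0. Then for all x with x₂ ≤ |x₁|/A and A ≥ 1, ψ(x) ≤ C( (x₂/A)^{1/2}‖ω‖₁^{1/2}‖ω‖₂^{1/2} + A^{−1}‖ω‖₁ + x₂(A/x₁)² ‖x₂ω‖₁ ), with C independent of ω and A. -/

import Mathlib

/-!
Split `ψ(x) = ∫ G(x, y) ω(y) dy` at the disc `|x - y| < ρ` with `ρ = |x₁| / (2A)`.
Outside it, `log (1 + s) ≤ s` gives `G(x, y) ≤ x₂ y₂ / (π |x - y|²) ≤ x₂ y₂ / (π ρ²)`, which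
produces the term `x₂ (A / x₁)² ‖x₂ ω‖₁`. Inside it, `|y₁| ≥ |x₁| / 2`, so symmetry and
monotonicity of `ω` in `y₁` give `ω(y) ≤ (2 / |x₁|) ∫ ω(s, y₂) ds`, while
`G(x, y) ≲ √ρ |y₁ - x₁|^{-1/2}`. Integrating first in `y₁` and then in `y₂` bounds the inner part
by `(ρ / |x₁|) ‖ω‖₁ ∼ A⁻¹ ‖ω‖₁`.
-/

open Real MeasureTheory

def upperHalf : Set (ℝ × ℝ) := {p | 0 < p.2}

noncomputable def sqdist (x y : ℝ × ℝ) : ℝ := (x.1 - y.1) ^ 2 + (x.2 - y.2) ^ 2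

noncomputable def halfPlaneGreen (x y : ℝ × ℝ) : ℝ :=
  (1 / (4 * π)) * Real.log (1 + 4 * x.2 * y.2 / sqdist x y)

open Set
open scoped ENNReal

lemma sqdist_nonneg (x y : ℝ × ℝ) : 0 ≤ sqdist x y := by
  unfold sqdist; positivity

lemma measurableSet_sqdist_lt (x : ℝ × ℝ) (r : ℝ) : MeasurableSet {y | sqdist x y < r} :=
  measurableSet_lt (by unfold sqdist; fun_prop) measurable_const

lemma measurableSet_upperHalf : MeasurableSet upperHalf :=
  measurableSet_lt measurable_const measurable_snd

lemma halfPlaneGreen_nonneg {x y : ℝ × ℝ} (hx : 0 ≤ x.2) (hy : 0 ≤ y.2) :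
    0 ≤ halfPlaneGreen x y := by
  have : 0 ≤ 4 * x.2 * y.2 / sqdist x y := by have := sqdist_nonneg x y; positivity
  unfold halfPlaneGreen
  exact mul_nonneg (by positivity) (log_nonneg (by linarith))

lemma halfPlaneGreen_le_div_sqdist {x y : ℝ × ℝ} (hx : 0 ≤ x.2) (hy : 0 ≤ y.2) :
    halfPlaneGreen x y ≤ x.2 * y.2 / (π * sqdist x y) := by
  set q := 4 * x.2 * y.2 / sqdist x y
  have hq : 0 ≤ q := by have := sqdist_nonneg x y; positivity
  have hlog : log (1 + q) ≤ q := by linarith [log_le_sub_one_of_pos (by linarith : 0 < 1 + q)]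
  calc halfPlaneGreen x y ≤ 1 / (4 * π) * q := by
        unfold halfPlaneGreen; gcongr
    _ = x.2 * y.2 / (π * sqdist x y) := by simp only [q]; field_simp

lemma halfPlaneGreen_le_of_sqdist_lt {x y : ℝ × ℝ} {ρ : ℝ} (hx : 0 ≤ x.2) (hxρ : x.2 ≤ 2 * ρ)
    (hy : 0 ≤ y.2) (hxy : sqdist x y < ρ ^ 2) (hne : y.1 ≠ x.1) :
    halfPlaneGreen x y ≤ π⁻¹ * √(5 * ρ) * |y.1 - x.1| ^ (-(1 / 2) : ℝ) := by
  set u := |y.1 - x.1|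
  have hu : 0 < u := abs_pos.mpr (sub_ne_zero.mpr hne)
  have hu_sq : u ^ 2 ≤ sqdist x y := by
    simp only [u, sq_abs, sqdist]; nlinarith [sq_nonneg (x.2 - y.2)]
  have hρ : 0 < ρ := by nlinarith
  have huρ : u < ρ := by nlinarith
  have hy_lt : y.2 < x.2 + ρ := by
    have : (x.2 - y.2) ^ 2 < ρ ^ 2 := by unfold sqdist at hxy; nlinarith [sq_nonneg (x.1 - y.1)]
    nlinarith
  -- `x₂ ≤ 2ρ` and `y₂ < x₂ + ρ ≤ 3ρ` give `4 x₂ y₂ ≤ 24 ρ²`, and `ρ² ≥ u²` absorbs the `1`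
  have harg : 1 + 4 * x.2 * y.2 / sqdist x y ≤ (5 * ρ / u) ^ 2 := by
    have h1 : 4 * x.2 * y.2 / sqdist x y ≤ 24 * ρ ^ 2 / u ^ 2 :=
      div_le_div₀ (by positivity) (by nlinarith) (by positivity) hu_sq
    have h2 : 1 ≤ ρ ^ 2 / u ^ 2 := (one_le_div (by positivity)).mpr (by nlinarith)
    have h3 : (5 * ρ / u) ^ 2 = 24 * ρ ^ 2 / u ^ 2 + ρ ^ 2 / u ^ 2 := by ring
    linarith
  have hlog : log (1 + 4 * x.2 * y.2 / sqdist x y) ≤ 4 * (5 * ρ / u) ^ (1 / 2 : ℝ) := by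
    have hpos : 0 < 1 + 4 * x.2 * y.2 / sqdist x y := by
      have := sqdist_nonneg x y; positivity
    calc log (1 + 4 * x.2 * y.2 / sqdist x y) ≤ log ((5 * ρ / u) ^ 2) := log_le_log hpos harg
      _ = 2 * log (5 * ρ / u) := by rw [log_pow]; norm_num
      _ ≤ 2 * ((5 * ρ / u) ^ (1 / 2 : ℝ) / (1 / 2)) := by
          gcongr; exact log_le_rpow_div (by positivity) (by norm_num)
      _ = 4 * (5 * ρ / u) ^ (1 / 2 : ℝ) := by ring
  calc halfPlaneGreen x y ≤ 1 / (4 * π) * (4 * (5 * ρ / u) ^ (1 / 2 : ℝ)) := by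
        unfold halfPlaneGreen; gcongr
    _ = π⁻¹ * √(5 * ρ) * u ^ (-(1 / 2) : ℝ) := by
        rw [div_rpow (by positivity) hu.le, rpow_neg hu.le, sqrt_eq_rpow]
        field_simp

lemma lintegral_Ioo_rpow_neg_half {ρ : ℝ} (hρ : 0 ≤ ρ) :
    ∫⁻ u in Ioo 0 ρ, ENNReal.ofReal (u ^ (-(1 / 2) : ℝ)) = ENNReal.ofReal (2 * √ρ) := by
  have hint : IntegrableOn (fun u : ℝ ↦ u ^ (-(1 / 2) : ℝ)) (Ioo 0 ρ) :=
    (intervalIntegral.intervalIntegrable_rpow' (by norm_num)).1.mono_set Ioo_subset_Ioc_self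
  rw [← ofReal_integral_eq_lintegral_ofReal hint
    (ae_restrict_of_forall_mem measurableSet_Ioo fun u hu ↦ rpow_nonneg hu.1.le _),
    ← integral_Ioc_eq_integral_Ioo, ← intervalIntegral.integral_of_le hρ,
    integral_rpow (by norm_num), sqrt_eq_rpow]
  congr 1
  norm_num
  ring

lemma lintegral_Ioo_abs_sub_rpow_neg_half_le (a : ℝ) {ρ : ℝ} (hρ : 0 ≤ ρ) :
    ∫⁻ t in Ioo (a - ρ) (a + ρ), ENNReal.ofReal (|t - a| ^ (-(1 / 2) : ℝ)) ≤
      ENNReal.ofReal (4 * √ρ) := by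
  set g : ℝ → ℝ≥0∞ := fun u ↦ ENNReal.ofReal (u ^ (-(1 / 2) : ℝ))
  set L := (fun t ↦ a - t) ⁻¹' Ico 0 ρ
  set R := (fun t ↦ t - a) ⁻¹' Ioo 0 ρ
  have hL : MeasurableSet L := (measurable_const.sub measurable_id) measurableSet_Ico
  have hR : MeasurableSet R := (measurable_id.sub measurable_const) measurableSet_Ioo
  have hleft : ∫⁻ t in L, g (a - t) = ENNReal.ofReal (2 * √ρ) := by
    rw [(Measure.measurePreserving_sub_left volume a).setLIntegral_comp_preimage_emb
      (MeasurableEquiv.subLeft a).measurableEmbedding, ← setLIntegral_congr Ioo_ae_eq_Ico,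
      lintegral_Ioo_rpow_neg_half hρ]
  have hright : ∫⁻ t in R, g (t - a) = ENNReal.ofReal (2 * √ρ) := by
    rw [(measurePreserving_sub_right volume a).setLIntegral_comp_preimage_emb
      (measurableEmbedding_subRight a), lintegral_Ioo_rpow_neg_half hρ]
  have hcover : Ioo (a - ρ) (a + ρ) ⊆ L ∪ R := by
    intro t ht
    rcases le_or_gt t a with h | h
    · exact Or.inl ⟨by show 0 ≤ a - t; linarith, by show a - t < ρ; linarith [ht.1]⟩
    · exact Or.inr ⟨by show 0 < t - a; linarith, by show t - a < ρ; linarith [ht.2]⟩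
  calc ∫⁻ t in Ioo (a - ρ) (a + ρ), ENNReal.ofReal (|t - a| ^ (-(1 / 2) : ℝ))
      ≤ (∫⁻ t in L, ENNReal.ofReal (|t - a| ^ (-(1 / 2) : ℝ))) +
          ∫⁻ t in R, ENNReal.ofReal (|t - a| ^ (-(1 / 2) : ℝ)) :=
        (lintegral_mono_set hcover).trans (lintegral_union_le _ _ _)
    _ = (∫⁻ t in L, g (a - t)) + ∫⁻ t in R, g (t - a) := by
        congr 1
        · refine setLIntegral_congr_fun hL fun t ht ↦ ?_
          simp only [g, abs_sub_comm t a, abs_of_nonneg (show 0 ≤ a - t from ht.1)]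
        · refine setLIntegral_congr_fun hR fun t ht ↦ ?_
          simp only [g, abs_of_pos (show 0 < t - a from ht.1)]
    _ = ENNReal.ofReal (4 * √ρ) := by
        rw [hleft, hright, ← ENNReal.ofReal_add (by positivity) (by positivity)]
        ring_nf

lemma ofReal_le_inv_mul_lintegral_of_even_of_antitoneOn {f : ℝ → ℝ} (hf : Function.Even f)
    (hanti : AntitoneOn f (Ioi 0)) {r a : ℝ} (hr : 0 < r) (hra : r ≤ |a|) :
    ENNReal.ofReal (f a) ≤ ENNReal.ofReal r⁻¹ * ∫⁻ s, ENNReal.ofReal (f s) := by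
  have hfa : f |a| = f a := by rcases abs_choice a with h | h <;> rw [h]; exact hf a
  have hmass : ENNReal.ofReal r * ENNReal.ofReal (f a) ≤ ∫⁻ s, ENNReal.ofReal (f s) :=
    calc ENNReal.ofReal r * ENNReal.ofReal (f a) = ∫⁻ _ in Ioo 0 r, ENNReal.ofReal (f a) := by
          rw [setLIntegral_const, Real.volume_Ioo, sub_zero, mul_comm]
      _ ≤ ∫⁻ s in Ioo 0 r, ENNReal.ofReal (f s) :=
          setLIntegral_mono' measurableSet_Ioo fun s hs ↦ ENNReal.ofReal_le_ofReal <|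
            hfa ▸ hanti hs.1 (hr.trans_le hra) (hs.2.le.trans hra)
      _ ≤ ∫⁻ s, ENNReal.ofReal (f s) := setLIntegral_le_lintegral _ _
  calc ENNReal.ofReal (f a) = ENNReal.ofReal r⁻¹ * (ENNReal.ofReal r * ENNReal.ofReal (f a)) := by
        rw [← mul_assoc, ← ENNReal.ofReal_mul (by positivity), inv_mul_cancel₀ hr.ne',
          ENNReal.ofReal_one, one_mul]
    _ ≤ ENNReal.ofReal r⁻¹ * ∫⁻ s, ENNReal.ofReal (f s) := by gcongr

lemma lintegral_Ioi_lintegral_eq_setLIntegral_upperHalf {f : ℝ × ℝ → ℝ≥0∞}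
    (hf : AEMeasurable f (volume.restrict upperHalf)) :
    ∫⁻ t in Ioi 0, ∫⁻ s, f (s, t) = ∫⁻ p in upperHalf, f p := by
  have hμ : volume.restrict upperHalf = volume.prod (volume.restrict (Ioi (0 : ℝ))) := by
    rw [show upperHalf = univ ×ˢ Ioi 0 by ext p; simp [upperHalf], Measure.volume_eq_prod,
      ← Measure.prod_restrict, Measure.restrict_univ]
  rw [hμ] at hf ⊢
  rw [lintegral_prod_symm _ hf]

lemma setLIntegral_slice_halfPlaneGreen_mul_le {ω : ℝ × ℝ → ℝ} {t : ℝ} (ht : 0 < t)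
    (heven : Function.Even fun s ↦ ω (s, t)) (hanti : AntitoneOn (fun s ↦ ω (s, t)) (Ioi 0))
    {x : ℝ × ℝ} {ρ : ℝ} (hx : 0 ≤ x.2) (hxρ : x.2 ≤ 2 * ρ) (hρx : 2 * ρ ≤ |x.1|) :
    ∫⁻ s in {s | sqdist x (s, t) < ρ ^ 2}, ENNReal.ofReal (halfPlaneGreen x (s, t) * ω (s, t)) ≤
      ENNReal.ofReal (8 * √5 * ρ / (π * |x.1|)) * ∫⁻ s, ENNReal.ofReal (ω (s, t)) := by
  have hρ : 0 ≤ ρ := by linarith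
  set S := {s | sqdist x (s, t) < ρ ^ 2}
  set M := ENNReal.ofReal (|x.1| / 2)⁻¹ * ∫⁻ s, ENNReal.ofReal (ω (s, t))
  set k : ℝ → ℝ≥0∞ := fun s ↦ ENNReal.ofReal (π⁻¹ * √(5 * ρ) * |s - x.1| ^ (-(1 / 2) : ℝ))
  have hS : S ⊆ Ioo (x.1 - ρ) (x.1 + ρ) := by
    intro s hs
    have : (s - x.1) ^ 2 < ρ ^ 2 := by
      simp only [S, mem_ofPred_eq, sqdist] at hs; nlinarith [sq_nonneg (x.2 - t)]
    have := abs_lt.mp (abs_lt_of_sq_lt_sq this hρ)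
    constructor <;> linarith
  have hpoint : ∀ s ∈ S, s ≠ x.1 →
      ENNReal.ofReal (halfPlaneGreen x (s, t) * ω (s, t)) ≤ k s * M := by
    intro s hs hne
    have hsρ : |x.1 - s| < ρ :=
      abs_sub_lt_iff.mpr ⟨by linarith [(hS hs).1], by linarith [(hS hs).2]⟩
    have hxs : |x.1| / 2 ≤ |s| := by linarith [abs_sub_abs_le_abs_sub x.1 s]
    rw [ENNReal.ofReal_mul (halfPlaneGreen_nonneg hx ht.le)]
    exact mul_le_mul'
      (ENNReal.ofReal_le_ofReal <| halfPlaneGreen_le_of_sqdist_lt hx hxρ ht.le hs hne)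
      (ofReal_le_inv_mul_lintegral_of_even_of_antitoneOn heven hanti
        (by linarith [abs_nonneg (x.1 - s)]) hxs)
  have hk : ∫⁻ s in Ioo (x.1 - ρ) (x.1 + ρ), k s ≤ ENNReal.ofReal (π⁻¹ * √(5 * ρ) * (4 * √ρ)) := by
    simp_rw [k, ENNReal.ofReal_mul (show 0 ≤ π⁻¹ * √(5 * ρ) by positivity)]
    rw [lintegral_const_mul _ (by fun_prop)]
    gcongr
    exact lintegral_Ioo_abs_sub_rpow_neg_half_le x.1 hρ
  calc ∫⁻ s in S, ENNReal.ofReal (halfPlaneGreen x (s, t) * ω (s, t))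
      ≤ ∫⁻ s in S, k s * M :=
        setLIntegral_mono_ae (by fun_prop) <| by
          filter_upwards [Measure.ae_ne volume x.1] with s hne hs using hpoint s hs hne
    _ ≤ ∫⁻ s in Ioo (x.1 - ρ) (x.1 + ρ), k s * M := lintegral_mono_set hS
    _ = (∫⁻ s in Ioo (x.1 - ρ) (x.1 + ρ), k s) * M := lintegral_mul_const _ (by fun_prop)
    _ ≤ ENNReal.ofReal (π⁻¹ * √(5 * ρ) * (4 * √ρ)) * M := by gcongr
    _ = ENNReal.ofReal (8 * √5 * ρ / (π * |x.1|)) * ∫⁻ s, ENNReal.ofReal (ω (s, t)) := by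
        rw [← mul_assoc, ← ENNReal.ofReal_mul (by positivity)]
        congr 2
        rw [sqrt_mul (by norm_num)]
        field_simp
        rw [sq_sqrt hρ]
        ring

lemma setLIntegral_near_halfPlaneGreen_mul_le {ω : ℝ × ℝ → ℝ}
    (hω : AEMeasurable ω (volume.restrict upperHalf)) (heven : ∀ t, Function.Even fun s ↦ ω (s, t))
    (hanti : ∀ t, 0 < t → AntitoneOn (fun s ↦ ω (s, t)) (Ioi 0))
    {x : ℝ × ℝ} {ρ : ℝ} (hx : 0 ≤ x.2) (hxρ : x.2 ≤ 2 * ρ) (hρx : 2 * ρ ≤ |x.1|) :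
    ∫⁻ y in upperHalf ∩ {y | sqdist x y < ρ ^ 2}, ENNReal.ofReal (halfPlaneGreen x y * ω y) ≤
      ENNReal.ofReal (8 * √5 * ρ / (π * |x.1|)) * ∫⁻ p in upperHalf, ENNReal.ofReal (ω p) := by
  set c := ENNReal.ofReal (8 * √5 * ρ / (π * |x.1|))
  set h : ℝ × ℝ → ℝ≥0∞ := fun y ↦ ENNReal.ofReal (halfPlaneGreen x y * ω y)
  set N := upperHalf ∩ {y | sqdist x y < ρ ^ 2}
  have hN : MeasurableSet N :=
    measurableSet_upperHalf.inter (measurableSet_sqdist_lt x _)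
  have hslice : ∀ t, ∫⁻ s, N.indicator h (s, t) ≤
      (Ioi 0).indicator (fun t ↦ c * ∫⁻ s, ENNReal.ofReal (ω (s, t))) t := by
    intro t
    by_cases ht : 0 < t
    · have hS : MeasurableSet {s | sqdist x (s, t) < ρ ^ 2} :=
        measurableSet_sqdist_lt x _ |>.preimage measurable_prodMk_right
      have hind : ∀ s,
          N.indicator h (s, t) = {s | sqdist x (s, t) < ρ ^ 2}.indicator (h ⟨·, t⟩) s := by
        simp [N, Set.indicator, upperHalf, ht]
      simp_rw [hind, lintegral_indicator hS, indicator_of_mem (show t ∈ Ioi 0 from ht)]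
      exact setLIntegral_slice_halfPlaneGreen_mul_le ht (heven t) (hanti t ht) hx hxρ hρx
    · have hind : ∀ s, N.indicator h (s, t) = 0 := fun s ↦ by simp [N, Set.indicator, upperHalf, ht]
      simp [hind]
  calc ∫⁻ y in N, h y = ∫⁻ y, N.indicator h y.swap ∂(volume.prod volume) := by
        rw [lintegral_prod_swap, ← Measure.volume_eq_prod, lintegral_indicator hN]
    -- this direction of Tonelli's theorem needs no measurability of the integrand
    _ ≤ ∫⁻ t, ∫⁻ s, N.indicator h (s, t) := lintegral_prod_le _
    _ ≤ ∫⁻ t, (Ioi 0).indicator (fun t ↦ c * ∫⁻ s, ENNReal.ofReal (ω (s, t))) t :=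
        lintegral_mono hslice
    _ = c * ∫⁻ p in upperHalf, ENNReal.ofReal (ω p) := by
        rw [lintegral_indicator measurableSet_Ioi, lintegral_const_mul' _ _ ENNReal.ofReal_ne_top,
          lintegral_Ioi_lintegral_eq_setLIntegral_upperHalf hω.ennreal_ofReal]

lemma setLIntegral_far_halfPlaneGreen_mul_le {ω : ℝ × ℝ → ℝ} {x : ℝ × ℝ} (hx : 0 ≤ x.2) {ρ : ℝ}
    (hρ : 0 < ρ) :
    ∫⁻ y in upperHalf \ {y | sqdist x y < ρ ^ 2}, ENNReal.ofReal (halfPlaneGreen x y * ω y) ≤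
      ENNReal.ofReal (x.2 / (π * ρ ^ 2)) * ∫⁻ y in upperHalf, ENNReal.ofReal (y.2 * ω y) := by
  set c := x.2 / (π * ρ ^ 2)
  have hc : 0 ≤ c := div_nonneg hx (by positivity)
  have hpoint : ∀ y ∈ upperHalf \ {y | sqdist x y < ρ ^ 2},
      ENNReal.ofReal (halfPlaneGreen x y * ω y) ≤
        ENNReal.ofReal c * ENNReal.ofReal (y.2 * ω y) := by
    rintro y ⟨hy, hyρ⟩
    have hy : 0 < y.2 := hy
    have hyρ : ρ ^ 2 ≤ sqdist x y := not_lt.mp hyρ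
    have hG : halfPlaneGreen x y ≤ c * y.2 :=
      calc halfPlaneGreen x y ≤ x.2 * y.2 / (π * sqdist x y) :=
            halfPlaneGreen_le_div_sqdist hx hy.le
        _ ≤ x.2 * y.2 / (π * ρ ^ 2) := by gcongr
        _ = c * y.2 := by ring
    rw [ENNReal.ofReal_mul (halfPlaneGreen_nonneg hx hy.le), ENNReal.ofReal_mul hy.le, ← mul_assoc,
      ← ENNReal.ofReal_mul hc]
    gcongr
  calc ∫⁻ y in upperHalf \ {y | sqdist x y < ρ ^ 2}, ENNReal.ofReal (halfPlaneGreen x y * ω y)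
      ≤ ∫⁻ y in upperHalf \ {y | sqdist x y < ρ ^ 2},
          ENNReal.ofReal c * ENNReal.ofReal (y.2 * ω y) :=
        setLIntegral_mono' (measurableSet_upperHalf.diff (measurableSet_sqdist_lt x _)) hpoint
    _ ≤ ∫⁻ y in upperHalf, ENNReal.ofReal c * ENNReal.ofReal (y.2 * ω y) :=
        lintegral_mono_set sdiff_subset
    _ = ENNReal.ofReal c * ∫⁻ y in upperHalf, ENNReal.ofReal (y.2 * ω y) :=
        lintegral_const_mul' _ _ ENNReal.ofReal_ne_top

lemma integral_halfPlaneGreen_mul_le {ω : ℝ × ℝ → ℝ} (hω : ∀ p, 0 ≤ ω p)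
    (hω₁ : Integrable ω (volume.restrict upperHalf))
    (hω₂ : Integrable (fun p ↦ p.2 * ω p) (volume.restrict upperHalf))
    (heven : ∀ t, Function.Even fun s ↦ ω (s, t))
    (hanti : ∀ t, 0 < t → AntitoneOn (fun s ↦ ω (s, t)) (Ioi 0))
    {x : ℝ × ℝ} {ρ : ℝ} (hx : 0 < x.2) (hxρ : x.2 ≤ 2 * ρ) (hρx : 2 * ρ ≤ |x.1|) :
    ∫ y in upperHalf, halfPlaneGreen x y * ω y ≤
      8 * √5 * ρ / (π * |x.1|) * (∫ p in upperHalf, ω p) +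
        x.2 / (π * ρ ^ 2) * ∫ p in upperHalf, p.2 * ω p := by
  have hρ : 0 < ρ := by linarith
  have hW₁ : 0 ≤ ∫ p in upperHalf, ω p := integral_nonneg hω
  have hy₂ω : ∀ p ∈ upperHalf, 0 ≤ p.2 * ω p := fun p hp ↦ mul_nonneg (le_of_lt hp) (hω p)
  have hW₂ : 0 ≤ ∫ p in upperHalf, p.2 * ω p := setIntegral_nonneg measurableSet_upperHalf hy₂ω
  set h : ℝ × ℝ → ℝ := fun y ↦ halfPlaneGreen x y * ω y
  set D := {y | sqdist x y < ρ ^ 2}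
  set c₁ := 8 * √5 * ρ / (π * |x.1|)
  set c₂ := x.2 / (π * ρ ^ 2)
  have hc₂ : 0 ≤ c₂ := div_nonneg hx.le (by positivity)
  have hlint : ∫⁻ y in upperHalf, ENNReal.ofReal ‖h y‖ ≤
      ENNReal.ofReal (c₁ * (∫ p in upperHalf, ω p) + c₂ * ∫ p in upperHalf, p.2 * ω p) :=
    calc ∫⁻ y in upperHalf, ENNReal.ofReal ‖h y‖ = ∫⁻ y in upperHalf, ENNReal.ofReal (h y) :=
          setLIntegral_congr_fun measurableSet_upperHalf fun y hy ↦ by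
            rw [norm_of_nonneg (mul_nonneg (halfPlaneGreen_nonneg hx.le (le_of_lt hy)) (hω y))]
      _ = (∫⁻ y in upperHalf ∩ D, ENNReal.ofReal (h y)) +
            ∫⁻ y in upperHalf \ D, ENNReal.ofReal (h y) :=
          (lintegral_inter_add_sdiff _ _ (measurableSet_sqdist_lt x _)).symm
      _ ≤ ENNReal.ofReal c₁ * (∫⁻ p in upperHalf, ENNReal.ofReal (ω p)) +
            ENNReal.ofReal c₂ * ∫⁻ p in upperHalf, ENNReal.ofReal (p.2 * ω p) :=
          add_le_add
            (setLIntegral_near_halfPlaneGreen_mul_le hω₁.1.aemeasurable heven hanti hx.le hxρ hρx)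
            (setLIntegral_far_halfPlaneGreen_mul_le hx.le hρ)
      _ = _ := by
          rw [← ofReal_integral_eq_lintegral_ofReal hω₁ (ae_of_all _ hω),
            ← ofReal_integral_eq_lintegral_ofReal hω₂
              (ae_restrict_of_forall_mem measurableSet_upperHalf hy₂ω),
            ← ENNReal.ofReal_mul (by positivity), ← ENNReal.ofReal_mul hc₂,
            ← ENNReal.ofReal_add (by positivity) (mul_nonneg hc₂ hW₂)]
  calc ∫ y in upperHalf, h y ≤ ‖∫ y in upperHalf, h y‖ := le_norm_self _
    _ ≤ _ := (norm_integral_le_lintegral_norm _).trans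
        (ENNReal.toReal_le_of_le_ofReal (by positivity) hlint)

/-- Decay estimate for the stream function of a symmetric, monotone vorticity:
for `x₂ ≤ |x₁|/A`,
`ψ(x) ≤ C((x₂/A)^{1/2}‖ω‖₁^{1/2}‖ω‖₂^{1/2} + A⁻¹‖ω‖₁ + x₂ (A/x₁)² ‖x₂ω‖₁)`. -/
theorem stream_function_decay :
    ∃ C > 0, ∀ ω : ℝ × ℝ → ℝ,
      (∀ p, 0 ≤ ω p) →
      Integrable ω (volume.restrict upperHalf) →
      MemLp ω 2 (volume.restrict upperHalf) →
      Integrable (fun p => p.2 * ω p) (volume.restrict upperHalf) →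
      (∀ x₁ x₂ : ℝ, ω (x₁, x₂) = ω (-x₁, x₂)) →
      (∀ x₂ : ℝ, 0 < x₂ → ∀ a b : ℝ, 0 < a → a ≤ b → ω (b, x₂) ≤ ω (a, x₂)) →
      ∀ A : ℝ, 1 ≤ A → ∀ x : ℝ × ℝ, 0 < x.2 → x.2 ≤ |x.1| / A →
        (∫ y in upperHalf, halfPlaneGreen x y * ω y) ≤
          C * (Real.sqrt (x.2 / A) * (∫ p in upperHalf, ω p) ^ ((1 : ℝ) / 2) *
                (∫ p in upperHalf, (ω p) ^ 2) ^ ((1 : ℝ) / 4) +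
              A⁻¹ * (∫ p in upperHalf, ω p) +
              x.2 * (A / x.1) ^ 2 * (∫ p in upperHalf, p.2 * ω p)) := by
  refine ⟨4, by norm_num, fun ω hω hω₁ _ hω₂ hsymm hmono A hA x hx hxA ↦ ?_⟩
  have hA₀ : 0 < A := by linarith
  have hx₁ : 0 < |x.1| := (div_pos_iff_of_pos_right hA₀).mp (hx.trans_le hxA)
  have hψ := integral_halfPlaneGreen_mul_le (ρ := |x.1| / (2 * A)) hω hω₁ hω₂
    (fun t s ↦ (hsymm s t).symm) (fun t ht a ha b _ hab ↦ hmono t ht a b ha hab) hx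
    (by rwa [mul_div_assoc', mul_div_mul_left _ _ two_ne_zero])
    (by rw [mul_div_assoc', mul_div_mul_left _ _ two_ne_zero]; exact div_le_self hx₁.le hA)
  have hc₁ : 8 * √5 * (|x.1| / (2 * A)) / (π * |x.1|) = 4 * √5 / π * A⁻¹ := by
    field_simp; norm_num
  have hc₂ : x.2 / (π * (|x.1| / (2 * A)) ^ 2) = 4 / π * (x.2 * (A / x.1) ^ 2) := by
    rw [div_pow, sq_abs]; field_simp; norm_num
  have hsqrt5 : 4 * √5 / π ≤ 4 := by
    rw [div_le_iff₀ pi_pos]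
    nlinarith [sq_sqrt (show (0 : ℝ) ≤ 5 by norm_num), sqrt_nonneg 5, pi_gt_three]
  have h4π : 4 / π ≤ 4 := by rw [div_le_iff₀ pi_pos]; nlinarith [pi_gt_three]
  have hW₁ : 0 ≤ ∫ p in upperHalf, ω p := integral_nonneg hω
  have hW₂ : 0 ≤ ∫ p in upperHalf, p.2 * ω p :=
    setIntegral_nonneg measurableSet_upperHalf fun p hp ↦ mul_nonneg (le_of_lt hp) (hω p)
  have hT : 0 ≤ √(x.2 / A) * (∫ p in upperHalf, ω p) ^ ((1 : ℝ) / 2) *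
      (∫ p in upperHalf, (ω p) ^ 2) ^ ((1 : ℝ) / 4) := by
    have : 0 ≤ ∫ p in upperHalf, (ω p) ^ 2 := integral_nonneg fun p ↦ sq_nonneg (ω p)
    positivity
  rw [hc₁, hc₂] at hψ
  linarith [mul_le_mul_of_nonneg_right hsqrt5 (mul_nonneg (inv_nonneg.mpr hA₀.le) hW₁),
    mul_le_mul_of_nonneg_right h4π (mul_nonneg (mul_nonneg hx.le (sq_nonneg (A / x.1))) hW₂)]
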